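/- arXiv:2205.05013 — 3 statements merged into one kernel-verified Lean document; each statement's English description precedes it below -/
import Mathlib

section
/- Let n and q be positive integers with q ≥ n, let A be an n × n real matrix, and let C be a q × n real matrix of full rank n. Suppose Â is an n × q real matrix satisfying Â·C = A. Then for any real α > 0, the observer gain E = αCᵀ + Â satisfies A − E·C = −αCᵀC, the matrix A − E·C is negative definite, and every (complex) eigenvalue of A − E·C has strictly negative real part. -/
open Matrix Polynomial
open scoped ComplexOrder

lemma aux_eig {n : ℕ} (M : Matrix (Fin n) (Fin n) ℂ) (μ : ℂ)
    (h : M.charpoly.IsRoot μ) : ∃ v ≠ 0, M *ᵥ v = μ • v := by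
  have hdet : (μ • (1 : Matrix (Fin n) (Fin n) ℂ) - M).det = 0 := by
    have h2 : ((charmatrix M).map (evalRingHom μ)).det = 0 := by
      have hh := RingHom.map_det (evalRingHom μ) (charmatrix M)
      rw [RingHom.mapMatrix_apply] at hh
      rw [← hh]; exact h
    rw [show (charmatrix M).map (evalRingHom μ) = μ • 1 - M from ?_] at h2
    · exact h2
    · ext i j
      by_cases hij : i = j
      · subst hij
        simp [charmatrix_apply_eq, Matrix.one_apply]
      · simp [charmatrix_apply_ne _ _ _ hij, Matrix.one_apply, hij]
  obtain ⟨v, hv, hv0⟩ := (Matrix.exists_mulVec_eq_zero_iff).2 hdet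
  refine ⟨v, hv, ?_⟩
  rw [Matrix.sub_mulVec, sub_eq_zero, Matrix.smul_mulVec, Matrix.one_mulVec] at hv0
  exact hv0.symm

theorem stmt_4 (n q : ℕ) (hn : 0 < n) (hq : 0 < q) (hqn : n ≤ q)
    (A : Matrix (Fin n) (Fin n) ℝ)
    (C : Matrix (Fin q) (Fin n) ℝ) (hC : C.rank = n)
    (Ahat : Matrix (Fin n) (Fin q) ℝ) (hAhat : Ahat * C = A)
    (α : ℝ) (hα : 0 < α) :
    A - (α • Cᵀ + Ahat) * C = -(α • (Cᵀ * C)) ∧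
    (∀ x : Fin n → ℝ, x ≠ 0 → x ⬝ᵥ (A - (α • Cᵀ + Ahat) * C) *ᵥ x < 0) ∧
    (∀ μ : ℂ, ((A - (α • Cᵀ + Ahat) * C).map (algebraMap ℝ ℂ)).charpoly.IsRoot μ → μ.re < 0) := by
  -- C has trivial kernel
  have hker : ∀ x : Fin n → ℝ, C *ᵥ x = 0 → x = 0 := by
    have hrn := LinearMap.finrank_range_add_finrank_ker C.mulVecLin
    rw [show Module.finrank ℝ (LinearMap.range C.mulVecLin) = n from hC,
      Module.finrank_fin_fun] at hrn
    have hk : LinearMap.ker C.mulVecLin = ⊥ := Submodule.finrank_eq_zero.mp (by omega)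
    intro x hx
    have : x ∈ LinearMap.ker C.mulVecLin := by simpa [Matrix.mulVecLin_apply] using hx
    simpa [hk] using this
  -- Part 1
  have h1 : A - (α • Cᵀ + Ahat) * C = -(α • (Cᵀ * C)) := by
    rw [Matrix.add_mul, Matrix.smul_mul, hAhat]
    abel
  refine ⟨h1, ?_, ?_⟩
  · -- Part 2
    intro x hx
    rw [h1]
    have hCx : C *ᵥ x ≠ 0 := fun h => hx (hker x h)
    have hnn : 0 ≤ (C *ᵥ x) ⬝ᵥ (C *ᵥ x) := by
      simpa [star_trivial] using dotProduct_star_self_nonneg (C *ᵥ x)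
    have hpos : 0 < (C *ᵥ x) ⬝ᵥ (C *ᵥ x) :=
      lt_of_le_of_ne hnn (fun h => hCx (dotProduct_self_eq_zero.mp h.symm))
    have : x ⬝ᵥ (-(α • (Cᵀ * C))) *ᵥ x = -(α * ((C *ᵥ x) ⬝ᵥ (C *ᵥ x))) := by
      rw [Matrix.neg_mulVec, dotProduct_neg, Matrix.smul_mulVec, dotProduct_smul,
        ← Matrix.mulVec_mulVec, Matrix.dotProduct_mulVec, Matrix.vecMul_transpose]
      simp [smul_eq_mul]
    rw [this]
    nlinarith
  · -- Part 3
    intro μ hroot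
    rw [h1] at hroot
    set Cc : Matrix (Fin q) (Fin n) ℂ := C.map (algebraMap ℝ ℂ) with hCc
    have hM : (-(α • (Cᵀ * C))).map (algebraMap ℝ ℂ) = -((α : ℂ) • (Ccᵀ * Cc)) := by
      ext i j
      simp only [Matrix.map_apply, Matrix.neg_apply, Matrix.smul_apply, Matrix.mul_apply,
        smul_eq_mul, Matrix.transpose_apply, hCc, Finset.mul_sum, Complex.coe_algebraMap]
      push_cast
      ring
    obtain ⟨v, hv, hvec⟩ := aux_eig _ μ hroot
    rw [hM] at hvec
    set w : Fin q → ℂ := Cc *ᵥ v with hw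
    have hstar : Cc *ᵥ star v = star w := by
      ext i
      simp [hw, Matrix.mulVec, dotProduct, hCc, Matrix.map_apply, star_sum, star_mul',
        Complex.star_def, Complex.conj_ofReal, mul_comm]
    -- w ≠ 0
    have hdetCC : (Cᵀ * C).det ≠ 0 := by
      intro hd
      obtain ⟨y, hy, hy0⟩ := (Matrix.exists_mulVec_eq_zero_iff).2 hd
      have hCy : C *ᵥ y = 0 := by
        have e : y ⬝ᵥ ((Cᵀ * C) *ᵥ y) = (C *ᵥ y) ⬝ᵥ (C *ᵥ y) := by
          rw [← Matrix.mulVec_mulVec, Matrix.dotProduct_mulVec, Matrix.vecMul_transpose]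
        have : (C *ᵥ y) ⬝ᵥ (C *ᵥ y) = 0 := by
          rw [← e, hy0, dotProduct_zero]
        exact dotProduct_self_eq_zero.mp this
      exact hy (hker y hCy)
    have hw0 : w ≠ 0 := by
      intro h0
      have h3 : ((Cᵀ * C).map (algebraMap ℝ ℂ)) *ᵥ v = 0 := by
        have : (Cᵀ * C).map (algebraMap ℝ ℂ) = Ccᵀ * Cc := by
          ext i j; simp [Matrix.map_apply, Matrix.mul_apply, hCc]
        rw [this, ← Matrix.mulVec_mulVec, ← hw, h0, Matrix.mulVec_zero]
      have hdet' : ((Cᵀ * C).map (algebraMap ℝ ℂ)).det ≠ 0 := by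
        rw [← RingHom.mapMatrix_apply, ← RingHom.map_det]
        simpa using hdetCC
      exact hdet' ((Matrix.exists_mulVec_eq_zero_iff).1 ⟨v, hv, h3⟩)
    -- the key equation
    have heq : μ * (star v ⬝ᵥ v) = -((α : ℂ) * (star w ⬝ᵥ w)) := by
      have lhs : star v ⬝ᵥ (-((α : ℂ) • (Ccᵀ * Cc)) *ᵥ v) = -((α : ℂ) * (star w ⬝ᵥ w)) := by
        rw [Matrix.neg_mulVec, dotProduct_neg, Matrix.smul_mulVec, dotProduct_smul,
          ← Matrix.mulVec_mulVec, Matrix.dotProduct_mulVec, Matrix.vecMul_transpose, hstar]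
        simp [smul_eq_mul, hw]
      rw [← lhs, hvec, dotProduct_smul, smul_eq_mul]
    have hs : (0 : ℂ) ≤ star v ⬝ᵥ v := dotProduct_star_self_nonneg v
    have hr : (0 : ℂ) ≤ star w ⬝ᵥ w := dotProduct_star_self_nonneg w
    have hs0 : star v ⬝ᵥ v ≠ 0 := fun h => hv (dotProduct_star_self_eq_zero.mp h)
    have hr0 : star w ⬝ᵥ w ≠ 0 := fun h => hw0 (dotProduct_star_self_eq_zero.mp h)
    rw [Complex.le_def] at hs hr
    simp only [Complex.zero_re, Complex.zero_im] at hs hr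
    have hs_re : 0 < (star v ⬝ᵥ v).re := by
      rcases lt_or_eq_of_le hs.1 with h | h
      · exact h
      · exact absurd (Complex.ext h.symm hs.2.symm) hs0
    have hr_re : 0 < (star w ⬝ᵥ w).re := by
      rcases lt_or_eq_of_le hr.1 with h | h
      · exact h
      · exact absurd (Complex.ext h.symm hr.2.symm) hr0
    have hre := congrArg Complex.re heq
    simp [Complex.mul_re, Complex.ofReal_re, Complex.ofReal_im, ← hs.2, ← hr.2] at hre
    -- hre : μ.re * s.re = -(α * r.re)
    nlinarith [hre, hs_re, hr_re, hα]
end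

section
/- Let n and q be positive integers with q > n, let A be an n × n real matrix, and let C be a q × n real matrix such that for every subset S of {1,…,q} with exactly n elements, the n × n submatrix of C formed by the rows indexed by S is invertible. Let I ⊆ {1,…,q} have at least n elements, and suppose Â is an n × q real matrix satisfying Â·C = A and Â·P_I = Â. Then for any real α > 0 and observer gain E = αCᵀ + Â, and for every L ⊆ {1,…,q} with I ⊆ L, every (complex) eigenvalue of A − E·P_L·C has strictly negative real part. -/
open Matrix

/-- The diagonal 0–1 projection matrix `P_L` associated with an index set `L`. -/
def projMat {q : ℕ} (L : Finset (Fin q)) : Matrix (Fin q) (Fin q) ℝ :=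
  Matrix.diagonal fun i => if i ∈ L then 1 else 0

lemma eval_charpoly_aux {k : ℕ} (M : Matrix (Fin k) (Fin k) ℂ) (μ : ℂ) :
    M.charpoly.eval μ = (Matrix.scalar (Fin k) μ - M).det := by
  rw [Matrix.charpoly, ← Polynomial.coe_evalRingHom, RingHom.map_det]
  congr 1
  ext i j
  by_cases h : i = j <;>
    simp [Matrix.charmatrix_apply, Matrix.scalar_apply, Matrix.diagonal_apply, h]

lemma star_dot_self {k : ℕ} (u : Fin k → ℂ) :
    star u ⬝ᵥ u = ((∑ i, Complex.normSq (u i) : ℝ) : ℂ) := by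
  push_cast
  simp only [dotProduct, Pi.star_apply, Complex.star_def]
  refine Finset.sum_congr rfl fun i _ => ?_
  rw [Complex.normSq_eq_conj_mul_self]

theorem stmt_7 (n q : ℕ) (hn : 0 < n) (hqn : n < q)
    (A : Matrix (Fin n) (Fin n) ℝ) (C : Matrix (Fin q) (Fin n) ℝ)
    (hminor : ∀ (S : Finset (Fin q)) (hS : S.card = n),
      IsUnit (C.submatrix (fun i : Fin n => ((S.orderIsoOfFin hS i : Fin q))) id))
    (I : Finset (Fin q)) (hI : n ≤ I.card)
    (Ahat : Matrix (Fin n) (Fin q) ℝ)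
    (hAC : Ahat * C = A) (hAP : Ahat * projMat I = Ahat)
    (α : ℝ) (hα : 0 < α) :
    ∀ L : Finset (Fin q), I ⊆ L →
      ∀ μ : ℂ,
        ((A - (α • Cᵀ + Ahat) * projMat L * C).map (algebraMap ℝ ℂ)).charpoly.IsRoot μ →
        μ.re < 0 := by
  intro L hL μ hμ
  -- Step 1: simplify the matrix to `-(α • M)` with `M = Cᵀ * P_L * C`.
  set M : Matrix (Fin n) (Fin n) ℝ := Cᵀ * projMat L * C with hMdef
  have hPIL : projMat I * projMat L = projMat I := by
    unfold projMat
    rw [Matrix.diagonal_mul_diagonal]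
    ext i j
    by_cases h : i ∈ I
    · simp [Matrix.diagonal_apply, h, hL h]
    · simp [Matrix.diagonal_apply, h]
  have hAPL : Ahat * projMat L = Ahat := by
    conv_lhs => rw [← hAP]
    rw [Matrix.mul_assoc, hPIL]
    exact hAP
  have hkey : A - (α • Cᵀ + Ahat) * projMat L * C = -(α • M) := by
    rw [Matrix.add_mul, Matrix.add_mul, hAPL, hAC, Matrix.smul_mul, Matrix.smul_mul, hMdef]
    abel
  rw [hkey] at hμ
  -- Step 2: obtain an eigenvector over ℂ.
  set Mc : Matrix (Fin n) (Fin n) ℂ := M.map (algebraMap ℝ ℂ) with hMcdef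
  have hmapneg : ((-(α • M)).map (algebraMap ℝ ℂ)) = -((α : ℂ) • Mc) := by
    ext i j
    simp [hMcdef, Matrix.map_apply, Algebra.algebraMap_eq_smul_one]
  have hdet : (Matrix.scalar (Fin n) μ - (-((α : ℂ) • Mc))).det = 0 := by
    have h := hμ
    rw [Polynomial.IsRoot, hmapneg, eval_charpoly_aux] at h
    exact h
  obtain ⟨v, hv0, hv⟩ := (Matrix.exists_mulVec_eq_zero_iff).2 hdet
  rw [Matrix.sub_mulVec, sub_eq_zero] at hv
  have hscal : (Matrix.scalar (Fin n) μ) *ᵥ v = μ • v := by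
    funext i
    simp [Matrix.scalar_apply, Matrix.mulVec_diagonal]
  have heig : μ • v = -((α : ℂ) • (Mc *ᵥ v)) := by
    rw [← hscal, hv, Matrix.neg_mulVec, Matrix.smul_mulVec]
  -- Step 3: express M as BᵀB and the dot products.
  set B : Matrix (Fin q) (Fin n) ℝ := projMat L * C with hBdef
  have hPP : projMat L * projMat L = projMat L := by
    unfold projMat
    rw [Matrix.diagonal_mul_diagonal]
    ext i j
    by_cases h : i ∈ L <;> simp [Matrix.diagonal_apply, h]
  have hPt : (projMat L)ᵀ = projMat L := by
    unfold projMat; rw [Matrix.diagonal_transpose]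
  have hBB : M = Bᵀ * B := by
    rw [hBdef, Matrix.transpose_mul, hPt, Matrix.mul_assoc,
      ← Matrix.mul_assoc (projMat L) (projMat L) C, hPP, hMdef, Matrix.mul_assoc]
  set Bc : Matrix (Fin q) (Fin n) ℂ := B.map (algebraMap ℝ ℂ) with hBcdef
  have hMcBB : Mc = Bcᴴ * Bc := by
    rw [hMcdef, hBB]
    ext i j
    simp only [Matrix.map_apply, Matrix.mul_apply, Matrix.conjTranspose_apply,
      Matrix.transpose_apply, hBcdef, map_sum]
    refine Finset.sum_congr rfl fun k _ => ?_
    simp [Complex.conj_ofReal]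
  have hquad : star v ⬝ᵥ (Mc *ᵥ v) = star (Bc *ᵥ v) ⬝ᵥ (Bc *ᵥ v) := by
    rw [hMcBB, ← Matrix.mulVec_mulVec, Matrix.dotProduct_mulVec,
      Matrix.vecMul_conjTranspose, star_star]
  -- Step 4: Bc *ᵥ v ≠ 0
  obtain ⟨S, hSL, hScard⟩ := Finset.exists_subset_card_eq
    (le_trans hI (Finset.card_le_card hL))
  set f : Fin n → Fin q := fun i => (S.orderIsoOfFin hScard i : Fin q) with hfdef
  have hfL : ∀ i, f i ∈ L := fun i => hSL (S.orderIsoOfFin hScard i).2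
  have hDunit : IsUnit ((C.map (algebraMap ℝ ℂ)).submatrix f id) := by
    have h := (hminor S hScard).map ((algebraMap ℝ ℂ).mapMatrix)
    rw [RingHom.mapMatrix_apply] at h
    rwa [Matrix.submatrix_map]
  have hBentry : ∀ i j, B i j = if i ∈ L then C i j else 0 := by
    intro i j
    rw [hBdef]
    unfold projMat
    rw [Matrix.diagonal_mul]
    by_cases h : i ∈ L <;> simp [h]
  have hw0 : Bc *ᵥ v ≠ 0 := by
    intro h0
    apply hv0
    have hinj := Matrix.mulVec_injective_iff_isUnit.mpr hDunit
    apply hinj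
    rw [Matrix.mulVec_zero]
    funext i
    have h1 := congrFun h0 (f i)
    simp only [Matrix.mulVec, dotProduct, Matrix.map_apply, Matrix.submatrix_apply,
      id, Pi.zero_apply, hBcdef] at h1 ⊢
    rw [← h1]
    refine Finset.sum_congr rfl fun j _ => ?_
    rw [hBentry, if_pos (hfL i)]
  -- Step 5: conclude.
  set r : ℝ := ∑ i, Complex.normSq ((Bc *ᵥ v) i) with hrdef
  set s : ℝ := ∑ i, Complex.normSq (v i) with hsdef
  have hr : 0 < r := by
    obtain ⟨i, hi⟩ := Function.ne_iff.mp hw0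
    exact Finset.sum_pos' (fun j _ => Complex.normSq_nonneg _)
      ⟨i, Finset.mem_univ i, Complex.normSq_pos.mpr hi⟩
  have hs : 0 < s := by
    obtain ⟨i, hi⟩ := Function.ne_iff.mp hv0
    exact Finset.sum_pos' (fun j _ => Complex.normSq_nonneg _)
      ⟨i, Finset.mem_univ i, Complex.normSq_pos.mpr hi⟩
  have hdot : μ * (s : ℂ) = -((α : ℂ) * (r : ℂ)) := by
    have h1 : star v ⬝ᵥ (μ • v) = star v ⬝ᵥ (-((α : ℂ) • (Mc *ᵥ v))) := by rw [heig]
    rw [dotProduct_smul, dotProduct_neg, dotProduct_smul,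
      hquad, star_dot_self, star_dot_self] at h1
    simp only [smul_eq_mul] at h1
    rw [hrdef, hsdef]
    exact h1
  have hμeq : μ = ((-(α * r) / s : ℝ) : ℂ) := by
    have hsne : (s : ℂ) ≠ 0 := by exact_mod_cast hs.ne'
    rw [Complex.ofReal_div, eq_div_iff hsne]
    push_cast
    linear_combination hdot
  rw [hμeq]
  simp only [Complex.ofReal_re]
  exact div_neg_of_neg_of_pos (by nlinarith) hs
end

section
/- Let K be a positive integer and let G₁,…,G_K be strictly positive real numbers such that there is a unique index k* with G_{k*} > G_k for all k ≠ k*. Define the sequence of weight vectors m(j) ∈ ℝ^K by m_k(0) = 1/K for all k and the recursion m_k(j+1) = m_k(j)·G_k / (Σ_{l=1}^K m_l(j)·G_l). Then m_{k*}(j) → 1 as j → ∞, and m_k(j) → 0 as j → ∞ for every k ≠ k*. -/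
theorem stmt_17 (K : ℕ) (hK : 0 < K) (G : Fin K → ℝ) (hG : ∀ k, 0 < G k)
    (kstar : Fin K) (hmax : ∀ k, k ≠ kstar → G k < G kstar)
    (m : ℕ → Fin K → ℝ)
    (h0 : ∀ k, m 0 k = 1 / K)
    (hrec : ∀ j k, m (j + 1) k = m j k * G k / ∑ l, m j l * G l) :
    Filter.Tendsto (fun j => m j kstar) Filter.atTop (nhds 1) ∧
    ∀ k, k ≠ kstar → Filter.Tendsto (fun j => m j k) Filter.atTop (nhds 0) := by
  have : Nonempty (Fin K) := ⟨kstar⟩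
  set S : ℕ → ℝ := fun j => ∑ l, G l ^ j with hS
  have hSpos : ∀ j, 0 < S j := fun j =>
    Finset.sum_pos (fun l _ => pow_pos (hG l) j) Finset.univ_nonempty
  have hform : ∀ j k, m j k = G k ^ j / S j := by
    intro j
    induction j with
    | zero => intro k; simp [h0, hS]
    | succ j ih =>
      intro k
      have hsum : ∑ l, m j l * G l = S (j + 1) / S j := by
        simp only [ih]
        rw [eq_div_iff (hSpos j).ne', Finset.sum_mul]
        apply Finset.sum_congr rfl
        intro l _
        field_simp [(hSpos j).ne']
        ring
      rw [hrec, hsum, ih]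
      field_simp [(hSpos j).ne', (hSpos (j+1)).ne']
      ring
  set r : Fin K → ℝ := fun l => G l / G kstar with hr
  have hrk : r kstar = 1 := div_self (hG kstar).ne'
  have hformr : ∀ j k, m j k = r k ^ j / ∑ l, r l ^ j := by
    intro j k
    have hgp : (0:ℝ) < G kstar ^ j := pow_pos (hG kstar) j
    have hsum : ∑ l, r l ^ j = S j / G kstar ^ j := by
      rw [eq_div_iff hgp.ne', Finset.sum_mul]
      apply Finset.sum_congr rfl
      intro l _
      simp [hr, div_pow]
      field_simp
    rw [hform, hsum, hr]
    rw [div_pow]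
    rw [div_div_div_eq]
    rw [mul_comm (G k ^ j) (G kstar ^ j), mul_div_mul_left _ _ hgp.ne']
  have hden : Filter.Tendsto (fun j => ∑ l, r l ^ j) Filter.atTop (nhds 1) := by
    have h1 : Filter.Tendsto (fun j => ∑ l, r l ^ j) Filter.atTop
        (nhds (∑ l, if l = kstar then (1:ℝ) else 0)) := by
      apply tendsto_finset_sum
      intro l _
      by_cases hl : l = kstar
      · rw [if_pos hl]
        refine Filter.Tendsto.congr (fun j => ?_) tendsto_const_nhds
        rw [hl, hrk, one_pow]
      · simp only [hl, if_neg, if_false]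
        apply tendsto_pow_atTop_nhds_zero_of_lt_one
        · exact le_of_lt (div_pos (hG l) (hG kstar))
        · rw [hr]
          exact (div_lt_one (hG kstar)).2 (hmax l hl)
    simpa using h1
  constructor
  · have := hden.inv₀ one_ne_zero
    simp only [inv_one] at this
    refine this.congr (fun j => ?_)
    rw [hformr j kstar, hrk, one_pow, one_div]
  · intro k hk
    have hnum : Filter.Tendsto (fun j => r k ^ j) Filter.atTop (nhds 0) := by
      apply tendsto_pow_atTop_nhds_zero_of_lt_one
      · exact le_of_lt (div_pos (hG k) (hG kstar))
      · exact (div_lt_one (hG kstar)).2 (hmax k hk)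
    have := hnum.div hden one_ne_zero
    simp only [zero_div] at this
    exact this.congr (fun j => (hformr j k).symm)
end
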